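/- arXiv:0808.0851 — 2 statements merged into one kernel-verified Lean document; each statement's English description precedes it below -/
import Mathlib

section
/- Fix real constants $C_1, C_2, C_3 > 0$ with $C_3^2 > C_2$. Let $B = \{(\xi,\eta) \in \mathbb{C}^2 : C_1|\xi|^2 + |\eta|^2 < C_2 \text{ and } |\xi|^2 < 1\}$ and define $t(\xi,\eta) = \eta + i C_3 \xi$. Then for every $\alpha = A_1 + iA_2 \in \mathbb{C}$ and every point of the level set $t^{-1}(\alpha) \cap B$, writing $\xi = Re^{i\vartheta}$, the quantity $\tfrac{1}{2}(1+R^2)\big(C_3 R^2 - 2R(A_2\cos\vartheta - A_1\sin\vartheta) - C_3\big)$ is strictly negative. -/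
/-!
Substituting `η = α - i C₃ ξ` expands the first defining inequality of `B` to
`C₁|ξ|² + |α|² + C₃²|ξ|² - 2C₃(A₂ Re ξ - A₁ Im ξ) < C₂ < C₃²`; dropping the nonnegative terms
`C₁|ξ|² + |α|²` and dividing by `C₃` gives the negativity of the second factor, while the first
factor `(1 + |ξ|²)/2` is positive.
-/

open Complex

lemma Complex.normSq_sub_I_mul_ofReal_mul (α ξ : ℂ) (c : ℝ) :
    normSq (α - I * c * ξ) =
      normSq α + c ^ 2 * normSq ξ - 2 * c * (α.im * ξ.re - α.re * ξ.im) := by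
  simp only [normSq_apply, sub_re, sub_im, mul_re, mul_im, I_re, I_im, ofReal_re, ofReal_im]
  ring

lemma Complex.sub_lt_zero_of_mul_normSq_add_normSq_sub_lt {C₁ C₂ c : ℝ} {α ξ : ℂ}
    (hC₁ : 0 ≤ C₁) (hc : 0 < c) (hC : C₂ < c ^ 2)
    (hB : C₁ * normSq ξ + normSq (α - I * c * ξ) < C₂) :
    c * normSq ξ - 2 * (α.im * ξ.re - α.re * ξ.im) - c < 0 := by
  rw [normSq_sub_I_mul_ofReal_mul] at hB
  have hC₁ξ : 0 ≤ C₁ * normSq ξ := mul_nonneg hC₁ (normSq_nonneg ξ)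
  have hscaled : c * (c * normSq ξ - 2 * (α.im * ξ.re - α.re * ξ.im) - c) < 0 := by
    nlinarith [normSq_nonneg α]
  exact neg_of_mul_neg_right hscaled hc.le

theorem stmt10_general (C₁ C₂ C₃ : ℝ) (hC₁ : 0 < C₁) (hC₃ : 0 < C₃)
    (hC : C₂ < C₃ ^ 2) (ξ η α : ℂ)
    (ht : η + Complex.I * C₃ * ξ = α)
    (hB1 : C₁ * Complex.normSq ξ + Complex.normSq η < C₂) :
    (1 / 2) * (1 + Complex.normSq ξ) *
      (C₃ * Complex.normSq ξ - 2 * (α.im * ξ.re - α.re * ξ.im) - C₃) < 0 := by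
  rw [eq_sub_of_add_eq ht] at hB1
  have hfactor : 0 < (1 / 2) * (1 + Complex.normSq ξ) := by
    have := Complex.normSq_nonneg ξ
    positivity
  exact mul_neg_of_pos_of_neg hfactor
    (Complex.sub_lt_zero_of_mul_normSq_add_normSq_sub_lt hC₁.le hC₃ hC hB1)

theorem stmt10 (C₁ C₂ C₃ : ℝ) (hC₁ : 0 < C₁) (hC₂ : 0 < C₂) (hC₃ : 0 < C₃)
    (hC : C₂ < C₃ ^ 2) (ξ η α : ℂ)
    (ht : η + Complex.I * C₃ * ξ = α)
    (hB1 : C₁ * Complex.normSq ξ + Complex.normSq η < C₂)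
    (hB2 : Complex.normSq ξ < 1) :
    (1 / 2) * (1 + Complex.normSq ξ) *
      (C₃ * Complex.normSq ξ - 2 * (α.im * ξ.re - α.re * ξ.im) - C₃) < 0 :=
  stmt10_general C₁ C₂ C₃ hC₁ hC₃ hC ξ η α ht hB1
end

section
/- Let $n \ge 1$ and let $A$ be a symmetric real $n\times n$ matrix with trace $H$ and eigenvalue $\lambda_{\max}$ of maximum absolute value. Then $\|A\|^2 = \sum_{i,j} A_{ij}^2 \ge \big(1 + \tfrac{1}{n}\big)\lambda_{\max}^2 - H^2$. -/
/-!
Write `λ₀` for the chosen eigenvalue. Since `‖A‖² = ∑ λᵢ²` and `H = ∑ λᵢ`, the claim is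
`λ₀² ≤ n (H² + ∑_{i ≠ i₀} λᵢ²)`. This is Cauchy–Schwarz for the `n` numbers `H` and `-λᵢ`
(`i ≠ i₀`), whose sum is `λ₀`.
-/

open Matrix Finset

theorem Matrix.trace_transpose_mul_self {m n R : Type*} [Fintype m] [Fintype n] [CommSemiring R]
    (A : Matrix m n R) : (Aᵀ * A).trace = ∑ i, ∑ j, A i j ^ 2 := by
  rw [Finset.sum_comm]
  simp [trace, mul_apply, sq]

theorem Matrix.IsHermitian.trace_mul_self_eq_sum_sq_eigenvalues {𝕜 n : Type*} [RCLike 𝕜]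
    [Fintype n] [DecidableEq n] {A : Matrix n n 𝕜} (hA : A.IsHermitian) :
    (A * A).trace = ∑ i, (hA.eigenvalues i : 𝕜) ^ 2 := by
  conv_lhs => rw [hA.spectral_theorem, ← map_mul, Unitary.conjStarAlgAut_apply, trace_mul_cycle,
    Unitary.coe_star_mul_self, one_mul, diagonal_mul_diagonal, trace_diagonal]
  simp [sq]

theorem one_add_inv_card_mul_sq_sub_sq_sum_le_sum_sq {ι : Type*} [Fintype ι] (f : ι → ℝ)
    (i₀ : ι) : (1 + 1 / (Fintype.card ι : ℝ)) * f i₀ ^ 2 - (∑ i, f i) ^ 2 ≤ ∑ i, f i ^ 2 := by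
  classical
  have split (h : ι → ℝ) : ∑ i, h i = h i₀ + ∑ i ∈ univ.erase i₀, h i :=
    (add_sum_erase _ h (mem_univ i₀)).symm
  set g := Function.update (-f) i₀ (∑ i, f i)
  have hg_self : g i₀ = ∑ i, f i := Function.update_self _ _ _
  have hg_erase : ∀ i ∈ univ.erase i₀, g i = -f i := fun i hi =>
    Function.update_of_ne (ne_of_mem_erase hi) _ _
  have hg_sum : ∑ i, g i = f i₀ := by
    rw [split g, hg_self, sum_congr rfl hg_erase, sum_neg_distrib, split f]
    ring
  have hg_sum_sq : ∑ i, g i ^ 2 = (∑ i, f i) ^ 2 + ∑ i, f i ^ 2 - f i₀ ^ 2 := by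
    have h_erase : ∑ i ∈ univ.erase i₀, g i ^ 2 = ∑ i ∈ univ.erase i₀, f i ^ 2 :=
      sum_congr rfl fun i hi => by rw [hg_erase i hi, neg_sq]
    rw [split (g · ^ 2), hg_self, h_erase, split (f · ^ 2)]
    ring
  have hcs := sq_sum_le_card_mul_sum_sq (s := univ) (f := g)
  rw [hg_sum, hg_sum_sq, card_univ] at hcs
  have hcard : (0 : ℝ) < Fintype.card ι := by exact_mod_cast Fintype.card_pos_iff.mpr ⟨i₀⟩
  have := (div_le_iff₀' hcard).mpr hcs
  rw [add_mul, one_div_mul_eq_div, one_mul]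
  linarith

theorem stmt16_general (n : ℕ) (A : Matrix (Fin n) (Fin n) ℝ) (hA : A.IsHermitian)
    (i₀ : Fin n) :
    (1 + 1 / (n : ℝ)) * hA.eigenvalues i₀ ^ 2 - A.trace ^ 2 ≤ ∑ i, ∑ j, A i j ^ 2 := by
  have h := one_add_inv_card_mul_sq_sub_sq_sum_le_sum_sq hA.eigenvalues i₀
  have h_sq : ∑ i, ∑ j, A i j ^ 2 = ∑ i, hA.eigenvalues i ^ 2 := by
    rw [← trace_transpose_mul_self, ← conjTranspose_eq_transpose_of_trivial, hA.eq,
      hA.trace_mul_self_eq_sum_sq_eigenvalues]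
    simp
  rw [Fintype.card_fin] at h
  simpa [hA.trace_eq_sum_eigenvalues, h_sq] using h

theorem stmt16 (n : ℕ) (A : Matrix (Fin n) (Fin n) ℝ) (hA : A.IsHermitian)
    (i₀ : Fin n) (hmax : ∀ i, |hA.eigenvalues i| ≤ |hA.eigenvalues i₀|) :
    (1 + 1 / (n : ℝ)) * hA.eigenvalues i₀ ^ 2 - A.trace ^ 2 ≤ ∑ i, ∑ j, A i j ^ 2 :=
  stmt16_general n A hA i₀
end
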